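/- arXiv:2508.12739 — 3 statements merged into one kernel-verified Lean document; each statement's English description precedes it below -/
import Mathlib

section
/- For every nonnegative integer n, Q_6^2(n) ≡ b_6(n) (mod 2), where b_6(n) is the number of partitions of n with no parts divisible by 6. -/
/-- `Q t s n` is the number of partitions of `n` into distinct parts such that
no part is congruent to `s` or `t - s` modulo `t`. -/
noncomputable def Q (t s n : ℕ) : ℕ :=
  Nat.card {p : n.Partition // p.parts.Nodup ∧
    ∀ x ∈ p.parts, x % t ≠ s % t ∧ x % t ≠ (t - s) % t}

/-- `b6 n` is the number of partitions of `n` with no part divisible by 6. -/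
noncomputable def b6 (n : ℕ) : ℕ :=
  Nat.card {p : n.Partition // ∀ x ∈ p.parts, ¬ (6 ∣ x)}

/-!
Modulo 2 we have `1 + X^k = 1 - X^k`, so the generating function of `b6` is
`∏_{6 ∤ k} (1 + X^k)⁻¹` and that of partitions into odd parts is `∏_{k odd} (1 + X^k)⁻¹`.
Comparing Euler factors part by part, (`b6`) · (distinct parts) and (`Q 6 2`) · (odd parts)
both equal `∏_{6 ∣ k} (1 + X^k)`, and Euler's theorem (distinct parts = odd parts) cancels the
second factors.
-/

open Finset PowerSeries PowerSeries.WithPiTopology Nat.Partition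

theorem Nat.Partition.hasProd_powerSeriesMk_card_distincts_inter_restricted
    (R : Type*) [CommSemiring R] [TopologicalSpace R] [T2Space R]
    (p : ℕ → Prop) [DecidablePred p] :
    HasProd (fun i ↦ if p (i + 1) then 1 + X ^ (i + 1) else 1)
      (PowerSeries.mk fun n ↦ (#(distincts n ∩ restricted n p) : R)) := by
  convert hasProd_genFun (fun i c ↦ if p i ∧ c = 1 then (1 : R) else 0) using 1
  · ext1 i
    rw [tsum_eq_single 0 (fun j hj ↦ by simp [hj])]
    split_ifs <;> simp_all
  · simp_rw [genFun, distincts, restricted, ← filter_and, card_filter, Finsupp.prod, prod_boole]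
    simp only [sum_boole, Multiset.toFinsupp_support, Multiset.mem_toFinset,
      Multiset.toFinsupp_apply, Multiset.nodup_iff_count_eq_one, ← forall_and]
    simp_rw [and_comm, Nat.cast_id]

theorem Q_eq_card_distincts_inter_restricted (t s n : ℕ) :
    Q t s n = #(distincts n ∩ restricted n fun x ↦ x % t ≠ s % t ∧ x % t ≠ (t - s) % t) := by
  rw [Q, Nat.card_eq_fintype_card, Fintype.card_subtype, distincts, restricted, ← filter_and]

theorem b6_eq_card_restricted (n : ℕ) : b6 n = #(restricted n (¬ 6 ∣ ·)) := by
  rw [b6, Nat.card_eq_fintype_card, Fintype.card_subtype, restricted]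

instance PowerSeries.instCharP {R : Type*} [Semiring R] (p : ℕ) [CharP R p] : CharP R⟦X⟧ p :=
  charP_of_injective_ringHom C_injective p

section CharTwo

variable {R : Type*} [CommRing R] [TopologicalSpace R] [IsTopologicalRing R] [T2Space R]
  [CharP R 2]

theorem tsum_X_pow_mul_mul_one_add_X_pow {k : ℕ} (hk : k ≠ 0) :
    (∑' j, (X : R⟦X⟧) ^ (k * j)) * (1 + X ^ k) = 1 := by
  simpa [pow_mul, CharTwo.sub_eq_add] using
    tsum_pow_mul_one_sub_of_constantCoeff_eq_zero (f := (X : R⟦X⟧) ^ k) (by simp [hk])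

theorem b6Factor_mul_distinctsFactor_eq_QFactor_mul_oddsFactor {k : ℕ} (hk : k ≠ 0) :
    (if ¬ 6 ∣ k then ∑' j, (X : R⟦X⟧) ^ (k * j) else 1) * ∑ j ∈ range 2, X ^ (k * j) =
      (if k % 6 ≠ 2 % 6 ∧ k % 6 ≠ (6 - 2) % 6 then 1 + X ^ k else 1) *
        if ¬ Even k then ∑' j, X ^ (k * j) else 1 := by
  have hS := tsum_X_pow_mul_mul_one_add_X_pow (R := R) hk
  simp only [sum_range_succ, range_one, sum_singleton, mul_zero, pow_zero, mul_one]
  by_cases h6 : 6 ∣ k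
  · have hE : Even k := Nat.even_iff.2 (by omega)
    rw [if_neg (not_not.2 h6), if_pos (by omega), if_neg (not_not.2 hE), one_mul, mul_one]
  by_cases hE : Even k
  · rw [Nat.even_iff] at hE
    rw [if_pos h6, if_neg (by omega), if_neg (not_not.2 (Nat.even_iff.2 hE)), hS, one_mul]
  · rw [Nat.even_iff] at hE
    rw [if_pos h6, if_pos (by omega), if_pos (mt Nat.even_iff.1 hE), hS, mul_comm, hS]

end CharTwo

theorem powerSeriesMk_b6_eq_powerSeriesMk_Q :
    (PowerSeries.mk fun n ↦ (b6 n : ZMod 2)) = PowerSeries.mk fun n ↦ (Q 6 2 n : ZMod 2) := by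
  have hb := hasProd_powerSeriesMk_card_restricted (ZMod 2) (¬ 6 ∣ ·)
  have hD := hasProd_powerSeriesMk_card_countRestricted (ZMod 2) two_pos
  have hQ := hasProd_powerSeriesMk_card_distincts_inter_restricted (ZMod 2)
    fun x ↦ x % 6 ≠ 2 % 6 ∧ x % 6 ≠ (6 - 2) % 6
  have hO := hasProd_powerSeriesMk_card_restricted (ZMod 2) (¬ Even ·)
  have hprod := (hb.mul hD).unique <| by
    convert hQ.mul hO using 1
    exact funext fun i ↦ b6Factor_mul_distinctsFactor_eq_QFactor_mul_oddsFactor i.succ_ne_zero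
  have hunit : IsUnit (PowerSeries.mk fun n ↦ (#(countRestricted n 2) : ZMod 2)) := by
    rw [isUnit_iff_constantCoeff]
    simp [countRestricted_two, distincts]
  have euler (n : ℕ) : #(restricted n (¬ Even ·)) = #(countRestricted n 2) := by
    rw [countRestricted_two, ← card_odds_eq_card_distincts, odds]
  simp_rw [euler] at hprod
  simp_rw [b6_eq_card_restricted, Q_eq_card_distincts_inter_restricted]
  exact hunit.mul_right_cancel hprod

theorem stmt6 (n : ℕ) : Q 6 2 n ≡ b6 n [MOD 2] := by
  rw [← ZMod.natCast_eq_natCast_iff]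
  simpa using (congrArg (coeff n) powerSeriesMk_b6_eq_powerSeriesMk_Q).symm
end

section
/- For every nonnegative integer n and every integer α ≥ 1, Q_{5α}^5(5n+3) ≡ 0 (mod 2) and Q_{5α}^5(5n+4) ≡ 0 (mod 2). -/
open Finset PowerSeries PowerSeries.WithPiTopology

theorem pentagonal_mod_five_lt_three (k : ℤ) : pentagonal k % 5 < 3 := by
  have h := congrArg (Int.cast : ℤ → ZMod 5) (two_mul_natCast_pentagonal k)
  push_cast at h
  rw [← ZMod.val_natCast]
  generalize (pentagonal k : ZMod 5) = a at h ⊢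
  generalize (k : ZMod 5) = b at h
  revert a b
  decide

namespace PowerSeries

theorem coeff_pentagonalSeries_eq_zero_of_three_le_mod_five (R : Type*) [CommRing R] {n : ℕ}
    (hn : 3 ≤ n % 5) : (pentagonalSeries R).coeff n = 0 := by
  refine coeff_pentagonalSeries_eq_zero R ?_
  rintro ⟨k, rfl⟩
  exact absurd (pentagonal_mod_five_lt_three k) (by omega)

theorem coeff_eq_zero_of_coeff_mul_eq_zero {R : Type*} [Semiring R] {A B : R⟦X⟧} {d r : ℕ}
    (hB₀ : coeff 0 B = 1) (hB : ∀ m, ¬ d ∣ m → coeff m B = 0)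
    (hAB : ∀ m, m % d = r → coeff m (A * B) = 0) (m : ℕ) (hm : m % d = r) :
    coeff m A = 0 := by
  induction m using Nat.strong_induction_on with
  | _ m ih =>
  have h := hAB m hm
  rwa [coeff_mul, sum_eq_single_of_mem (m, 0) (by simp) ?_, hB₀, mul_one] at h
  rintro ⟨i, j⟩ hij hne
  rw [HasAntidiagonal.mem_antidiagonal] at hij
  by_cases hdj : d ∣ j
  · obtain ⟨k, rfl⟩ := hdj
    have hi : i < m := by
      by_contra
      exact hne (Prod.ext (by omega) (by simp only; omega))
    rw [ih i hi (by rw [← hm, ← hij, Nat.add_mul_mod_self_left]), zero_mul]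
  · rw [hB j hdj, mul_zero]

end PowerSeries

namespace Nat.Partition

theorem restricted_eq_empty_of_not_dvd {n d : ℕ} {p : ℕ → Prop} [DecidablePred p]
    (hp : ∀ i, p i → d ∣ i) (hn : ¬ d ∣ n) : restricted n p = ∅ := by
  refine eq_empty_of_forall_notMem fun x hx ↦ hn ?_
  rw [← x.parts_sum]
  exact Multiset.dvd_sum fun i hi ↦ hp i ((mem_filter.mp hx).2 i hi)

theorem card_distincts_inter_restricted_zero (p : ℕ → Prop) [DecidablePred p] :
    #(distincts 0 ∩ restricted 0 p) = 1 := by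
  simp [distincts, restricted]

section GenFun

variable (R : Type*) [CommSemiring R]

theorem hasProd_powerSeriesMk_card_distincts_inter_restricted_s8 [TopologicalSpace R] [T2Space R]
    (p : ℕ → Prop) [DecidablePred p] :
    HasProd (fun i ↦ if p (i + 1) then 1 + X ^ (i + 1) else 1)
      (PowerSeries.mk fun n ↦ (#(distincts n ∩ restricted n p) : R)) := by
  convert! hasProd_genFun (fun i c ↦ if c = 1 ∧ p i then (1 : R) else 0) using 1
  · ext1 i
    rw [tsum_eq_single 0 fun j hj ↦ by simp [hj]]
    by_cases h : p (i + 1) <;> simp [h]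
  · simp_rw [genFun, distincts, restricted, ← filter_and, card_filter, Finsupp.prod, prod_boole]
    congr! with n
    push_cast
    refine sum_congr rfl fun x _ ↦ if_congr ?_ rfl rfl
    simp [forall_and, Multiset.nodup_iff_count_eq_one]

theorem hasProd_powerSeriesMk_card_distincts [TopologicalSpace R] [T2Space R] :
    HasProd (fun i ↦ 1 + X ^ (i + 1)) (PowerSeries.mk fun n ↦ (#(distincts n) : R)) := by
  simpa [restricted] using hasProd_powerSeriesMk_card_distincts_inter_restricted_s8 R fun _ ↦ True

theorem powerSeriesMk_card_distincts_inter_restricted_mul (p : ℕ → Prop) [DecidablePred p] :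
    (PowerSeries.mk fun n ↦ (#(distincts n ∩ restricted n p) : R)) *
        PowerSeries.mk (fun n ↦ (#(distincts n ∩ restricted n (¬ p ·)) : R)) =
      PowerSeries.mk fun n ↦ (#(distincts n) : R) := by
  let _ : TopologicalSpace R := ⊥
  have _ : DiscreteTopology R := ⟨rfl⟩
  refine ((hasProd_powerSeriesMk_card_distincts_inter_restricted_s8 R p).mul
    (hasProd_powerSeriesMk_card_distincts_inter_restricted_s8 R (¬ p ·))).unique ?_
  convert hasProd_powerSeriesMk_card_distincts R using 2 with i
  by_cases h : p (i + 1) <;> simp [h]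

end GenFun

theorem powerSeriesMk_card_distincts_eq_pentagonalSeries (R : Type*) [CommRing R] [CharP R 2] :
    PowerSeries.mk (fun n ↦ (#(distincts n) : R)) = pentagonalSeries R := by
  let _ : TopologicalSpace R := ⊥
  have _ : DiscreteTopology R := ⟨rfl⟩
  have _ := charP_of_injective_algebraMap (A := R⟦X⟧) C_injective 2
  refine (hasProd_powerSeriesMk_card_distincts R).unique ?_
  simpa only [CharTwo.sub_eq_add] using hasProd_one_sub_X_pow R

theorem even_card_distincts_inter_restricted {p : ℕ → Prop} [DecidablePred p]
    (hp : ∀ i, ¬ p i → 5 ∣ i) {m : ℕ} (hm : 3 ≤ m % 5) :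
    Even #(distincts m ∩ restricted m p) := by
  have hB : ∀ j, ¬ 5 ∣ j → (#(distincts j ∩ restricted j (¬ p ·)) : ZMod 2) = 0 :=
    fun j hj ↦ by simp [restricted_eq_empty_of_not_dvd hp hj]
  have h := coeff_eq_zero_of_coeff_mul_eq_zero
    (B := PowerSeries.mk fun n ↦ (#(distincts n ∩ restricted n (¬ p ·)) : ZMod 2))
    (by simp [card_distincts_inter_restricted_zero]) (by simpa using hB)
    (fun j hj ↦ by
      rw [powerSeriesMk_card_distincts_inter_restricted_mul,
        powerSeriesMk_card_distincts_eq_pentagonalSeries]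
      exact coeff_pentagonalSeries_eq_zero_of_three_le_mod_five _ (hj ▸ hm)) m rfl
  rwa [coeff_mk, ZMod.natCast_eq_zero_iff_even] at h

end Nat.Partition

theorem Q_eq_card (t s n : ℕ) :
    Q t s n = #(Nat.Partition.distincts n ∩
      Nat.Partition.restricted n fun x ↦ x % t ≠ s % t ∧ x % t ≠ (t - s) % t) := by
  rw [Q, Nat.card_eq_fintype_card, Fintype.card_subtype, Nat.Partition.distincts,
    Nat.Partition.restricted, ← filter_and]

theorem stmt8_general (α n : ℕ) :
    Q (5 * α) 5 (5 * n + 3) ≡ 0 [MOD 2] ∧ Q (5 * α) 5 (5 * n + 4) ≡ 0 [MOD 2] := by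
  have hexcluded : ∀ x, ¬ (x % (5 * α) ≠ 5 % (5 * α) ∧ x % (5 * α) ≠ (5 * α - 5) % (5 * α)) →
      5 ∣ x := by
    intro x hx
    have h5α : 5 ∣ 5 * α := dvd_mul_right 5 α
    rcases not_and_or.mp hx with h | h <;> rw [not_not] at h
    · exact (Nat.ModEq.dvd_iff h h5α).mpr dvd_rfl
    · exact (Nat.ModEq.dvd_iff h h5α).mpr (Nat.dvd_sub h5α dvd_rfl)
  simp only [Q_eq_card, Nat.modEq_zero_iff_dvd, ← even_iff_two_dvd]
  exact ⟨Nat.Partition.even_card_distincts_inter_restricted hexcluded (by omega),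
    Nat.Partition.even_card_distincts_inter_restricted hexcluded (by omega)⟩

theorem stmt8 (α n : ℕ) (hα : 1 ≤ α) :
    Q (5 * α) 5 (5 * n + 3) ≡ 0 [MOD 2] ∧ Q (5 * α) 5 (5 * n + 4) ≡ 0 [MOD 2] :=
  stmt8_general α n
end

section
/- For every nonnegative integer n and every integer α ≥ 1, Q_{7α}^7(7n+3) ≡ 0 (mod 2), Q_{7α}^7(7n+4) ≡ 0 (mod 2), and Q_{7α}^7(7n+6) ≡ 0 (mod 2). -/
namespace Stmt9
open Finset

noncomputable section

def mx (S : Finset ℕ) : ℕ := sSup (S : Set ℕ)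
def mn (S : Finset ℕ) : ℕ := sInf (S : Set ℕ)
def rb (S : Finset ℕ) : ℕ := sInf {x | x ∈ S ∧ Finset.Icc x (mx S) ⊆ S}

/-- Franklin's involution. -/
def fr (S : Finset ℕ) : Finset ℕ :=
  if mn S + rb S ≤ mx S + 1 then
    insert (mx S + 1) ((S.erase (mn S)).erase (mx S - mn S + 1))
  else
    insert (mx S + 1 - rb S) (insert (rb S - 1) (S.erase (mx S)))

variable {S T : Finset ℕ} {x a : ℕ}

lemma le_mx (hx : x ∈ S) : x ≤ mx S :=
  le_csSup S.finite_toSet.bddAbove hx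

lemma mx_mem (hne : S.Nonempty) : mx S ∈ S := by
  have := Set.Nonempty.csSup_mem (Finset.coe_nonempty.mpr hne) S.finite_toSet
  exact_mod_cast this

lemma mn_le (hx : x ∈ S) : mn S ≤ x := Nat.sInf_le hx

lemma mn_mem (hne : S.Nonempty) : mn S ∈ S := by
  obtain ⟨y, hy⟩ := hne
  exact Nat.sInf_mem ⟨y, hy⟩

lemma rb_mem_spec (hne : S.Nonempty) : rb S ∈ S ∧ Finset.Icc (rb S) (mx S) ⊆ S := by
  have h : mx S ∈ {x | x ∈ S ∧ Finset.Icc x (mx S) ⊆ S} :=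
    ⟨mx_mem hne, by rw [Finset.Icc_self]; simpa using mx_mem hne⟩
  exact Nat.sInf_mem ⟨_, h⟩

lemma rb_le (hx : x ∈ S) (h : Finset.Icc x (mx S) ⊆ S) : rb S ≤ x := Nat.sInf_le ⟨hx, h⟩

lemma mx_eq (ha : a ∈ T) (hub : ∀ x ∈ T, x ≤ a) : mx T = a :=
  le_antisymm (csSup_le (Set.Nonempty.mono (Set.singleton_subset_iff.mpr ha) (Set.singleton_nonempty a)) (fun x hx => hub x hx)) (le_mx ha)

lemma mn_eq (ha : a ∈ T) (hlb : ∀ x ∈ T, a ≤ x) : mn T = a :=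
  le_antisymm (mn_le ha) (le_csInf ⟨a, ha⟩ (fun x hx => hlb x hx))

lemma rb_eq (ha : a ∈ T) (h1 : Finset.Icc a (mx T) ⊆ T)
    (hmin : ∀ y ∈ T, Finset.Icc y (mx T) ⊆ T → a ≤ y) : rb T = a :=
  le_antisymm (rb_le ha h1) (le_csInf ⟨a, ha, h1⟩ (fun y hy => hmin y hy.1 hy.2))

lemma one_le_of_mem (h0 : 0 ∉ S) (hx : x ∈ S) : 1 ≤ x :=
  Nat.pos_of_ne_zero (by rintro rfl; exact h0 hx)

lemma caseA (h0 : 0 ∉ S) (hne : S.Nonempty)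
    (hA : mn S + rb S ≤ mx S + 1)
    (hex : ¬(mn S = rb S ∧ mn S + mn S = mx S + 1)) :
    0 ∉ fr S ∧ (fr S).sum id = S.sum id ∧ fr S ≠ S ∧ fr (fr S) = S := by
  obtain ⟨hbS, hbrun⟩ := rb_mem_spec hne
  have hsS : mn S ∈ S := mn_mem hne
  have hs1 : 1 ≤ mn S := one_le_of_mem h0 hsS
  have hbM : rb S ≤ mx S := le_mx hbS
  have hsM : mn S ≤ mx S := le_mx hsS
  have hsb : mn S ≤ rb S := mn_le hbS
  have hm1 : mx S - mn S + 1 ∈ S := hbrun (mem_Icc.mpr ⟨by omega, by omega⟩)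
  have hms : mx S - mn S + 1 ≠ mn S := by
    intro h; exact hex ⟨by omega, by omega⟩
  have hsm : mn S < mx S - mn S + 1 := lt_of_le_of_ne (mn_le hm1) (Ne.symm hms)
  have hfrS : fr S = insert (mx S + 1) ((S.erase (mn S)).erase (mx S - mn S + 1)) := by
    rw [fr, if_pos hA]
  set M := mx S with hMdef
  set s := mn S with hsdef
  set T := insert (M + 1) ((S.erase s).erase (M - s + 1)) with hT
  have hMT : M + 1 ∉ S := fun h => by have := le_mx h; omega
  have hTsub : ∀ x ∈ T, x = M + 1 ∨ (x ∈ S ∧ x ≠ s ∧ x ≠ M - s + 1) := by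
    intro x hx
    rcases mem_insert.mp hx with h | h
    · exact Or.inl h
    · rcases mem_erase.mp h with ⟨h1, h2⟩
      rcases mem_erase.mp h2 with ⟨h3, h4⟩
      exact Or.inr ⟨h4, h3, h1⟩
  have hT0 : 0 ∉ T := by
    intro h
    rcases hTsub 0 h with h | ⟨h, _⟩
    · omega
    · exact h0 h
  have h1 : M - s + 1 ∈ S.erase s := mem_erase.mpr ⟨hms, hm1⟩
  have h2 : M + 1 ∉ (S.erase s).erase (M - s + 1) :=
    fun h => hMT (mem_of_mem_erase (mem_of_mem_erase h))
  have hsum : T.sum id = S.sum id := by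
    rw [hT, sum_insert h2]
    have e1 := Finset.add_sum_erase S id hsS
    have e2 := Finset.add_sum_erase (S.erase s) id h1
    simp only [id] at *
    omega
  have hTne : T ≠ S := fun h => hMT (h ▸ mem_insert_self _ _)
  have hTne' : T.Nonempty := ⟨M + 1, mem_insert_self _ _⟩
  have hmxT : mx T = M + 1 := by
    refine mx_eq (mem_insert_self _ _) (fun x hx => ?_)
    rcases hTsub x hx with h | ⟨h, _⟩
    · omega
    · have := le_mx h; omega
  have hmnT : s < mn T := by
    have hm := mn_mem hTne'
    rcases hTsub _ hm with h | ⟨h, hne2, _⟩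
    · omega
    · exact lt_of_le_of_ne (mn_le h) (Ne.symm hne2)
  have hicc : Finset.Icc (M - s + 2) (mx T) ⊆ T := by
    intro x hx
    rw [mem_Icc, hmxT] at hx
    by_cases hxM : x = M + 1
    · rw [hxM]; exact mem_insert_self _ _
    · have hxS : x ∈ S := hbrun (mem_Icc.mpr ⟨by omega, by omega⟩)
      exact mem_insert_of_mem (mem_erase.mpr ⟨by omega, mem_erase.mpr ⟨by omega, hxS⟩⟩)
  have hmem2 : M - s + 2 ∈ T := hicc (mem_Icc.mpr ⟨le_refl _, by rw [hmxT]; omega⟩)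
  have hnm : M - s + 1 ∉ T := by
    intro h
    rcases hTsub _ h with h | ⟨_, _, h⟩
    · omega
    · exact h rfl
  have hrbT : rb T = M - s + 2 := by
    refine rb_eq hmem2 hicc (fun y hy hsub => ?_)
    by_contra hlt
    exact hnm (hsub (mem_Icc.mpr ⟨by omega, by rw [hmxT]; omega⟩))
  have hcond2 : ¬ (mn T + rb T ≤ mx T + 1) := by rw [hrbT, hmxT]; omega
  have hfrT : fr T = insert (mx T + 1 - rb T) (insert (rb T - 1) (T.erase (mx T))) := by
    rw [fr, if_neg hcond2]
  have e3 : T.erase (mx T) = (S.erase s).erase (M - s + 1) := by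
    rw [hmxT, hT, erase_insert h2]
  have hfin : fr T = S := by
    rw [hfrT, e3, hmxT, hrbT]
    have e1' : M + 1 + 1 - (M - s + 2) = s := by omega
    have e2' : M - s + 2 - 1 = M - s + 1 := by omega
    rw [e1', e2', insert_erase h1, insert_erase hsS]
  rw [hfrS]
  exact ⟨hT0, hsum, hTne, by rw [hfin]⟩


lemma caseB (h0 : 0 ∉ S) (hne : S.Nonempty)
    (hB : ¬ (mn S + rb S ≤ mx S + 1))
    (hex : ¬(mn S = rb S ∧ 2 * rb S = mx S + 2)) :
    0 ∉ fr S ∧ (fr S).sum id = S.sum id ∧ fr S ≠ S ∧ fr (fr S) = S := by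
  obtain ⟨hbS, hbrun⟩ := rb_mem_spec hne
  have hsS : mn S ∈ S := mn_mem hne
  have hs1 : 1 ≤ mn S := one_le_of_mem h0 hsS
  have hbM : rb S ≤ mx S := le_mx hbS
  have hsM : mn S ≤ mx S := le_mx hsS
  have hsb : mn S ≤ rb S := mn_le hbS
  have h2b : mx S + 3 ≤ 2 * rb S := by
    by_contra hcon
    exact hex ⟨by omega, by omega⟩
  have hrs : mx S + 1 - rb S < mn S := by omega
  have hrnotS : mx S + 1 - rb S ∉ S := fun h => by have := mn_le h; omega
  have hbp : rb S - 1 ∉ S := by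
    intro h
    have hsub : Finset.Icc (rb S - 1) (mx S) ⊆ S := by
      intro x hx
      rw [mem_Icc] at hx
      by_cases hx1 : x = rb S - 1
      · rwa [hx1]
      · exact hbrun (mem_Icc.mpr ⟨by omega, hx.2⟩)
    have := rb_le h hsub
    omega
  have hfrS : fr S = insert (mx S + 1 - rb S) (insert (rb S - 1) (S.erase (mx S))) := by
    rw [fr, if_neg hB]
  set M := mx S with hMdef
  set s := mn S with hsdef
  set b := rb S with hbdef
  have hMS : M ∈ S := mx_mem hne
  set T := insert (M + 1 - b) (insert (b - 1) (S.erase M)) with hT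
  have hTsub : ∀ x ∈ T, x = M + 1 - b ∨ x = b - 1 ∨ (x ∈ S ∧ x ≠ M) := by
    intro x hx
    rcases mem_insert.mp hx with h | h
    · exact Or.inl h
    · rcases mem_insert.mp h with h | h
      · exact Or.inr (Or.inl h)
      · rcases mem_erase.mp h with ⟨h1, h2⟩
        exact Or.inr (Or.inr ⟨h2, h1⟩)
  have hT0 : 0 ∉ T := by
    intro h
    rcases hTsub 0 h with h | h | ⟨h, _⟩
    · omega
    · omega
    · exact h0 h
  have hd1 : b - 1 ∉ S.erase M := fun h => hbp (mem_of_mem_erase h)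
  have hd2 : M + 1 - b ∉ insert (b - 1) (S.erase M) := by
    intro h
    rcases mem_insert.mp h with h | h
    · omega
    · exact hrnotS (mem_of_mem_erase h)
  have hsum : T.sum id = S.sum id := by
    rw [hT, sum_insert hd2, sum_insert hd1]
    have e1 := Finset.add_sum_erase S id hMS
    simp only [id] at *
    omega
  have hMnotT : M ∉ T := by
    intro h
    rcases hTsub _ h with h | h | ⟨_, h⟩ <;> omega
  have hTne : T ≠ S := fun h => hMnotT (h ▸ hMS)
  have hTne' : T.Nonempty := ⟨M + 1 - b, mem_insert_self _ _⟩
  have hM1T : M - 1 ∈ T := by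
    by_cases hb : b ≤ M - 1
    · have : M - 1 ∈ S := hbrun (mem_Icc.mpr ⟨hb, by omega⟩)
      exact mem_insert_of_mem (mem_insert_of_mem (mem_erase.mpr ⟨by omega, this⟩))
    · have : b - 1 = M - 1 := by omega
      exact mem_insert_of_mem (this ▸ mem_insert_self _ _)
  have hmxT : mx T = M - 1 := by
    refine mx_eq hM1T (fun x hx => ?_)
    rcases hTsub x hx with h | h | ⟨h, hne2⟩
    · omega
    · omega
    · have := le_mx h; omega
  have hmnT : mn T = M + 1 - b := by
    refine mn_eq (mem_insert_self _ _) (fun x hx => ?_)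
    rcases hTsub x hx with h | h | ⟨h, _⟩
    · omega
    · omega
    · have := mn_le h; omega
  have hbm1T : b - 1 ∈ T := mem_insert_of_mem (mem_insert_self _ _)
  have hrbT_le : rb T ≤ b - 1 := by
    refine rb_le hbm1T ?_
    intro x hx
    rw [mem_Icc, hmxT] at hx
    by_cases hx1 : x = b - 1
    · rw [hx1]; exact hbm1T
    · have : x ∈ S := hbrun (mem_Icc.mpr ⟨by omega, by omega⟩)
      exact mem_insert_of_mem (mem_insert_of_mem (mem_erase.mpr ⟨by omega, this⟩))
  have hcond : mn T + rb T ≤ mx T + 1 := by rw [hmnT, hmxT]; omega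
  have hfrT : fr T = insert (mx T + 1) ((T.erase (mn T)).erase (mx T - mn T + 1)) := by
    rw [fr, if_pos hcond]
  have hfin : fr T = S := by
    rw [hfrT, hmxT, hmnT, hT]
    have e1 : M - 1 + 1 = M := by omega
    have e2 : M - 1 - (M + 1 - b) + 1 = b - 1 := by omega
    rw [e1, e2, erase_insert hd2, erase_insert hd1, insert_erase hMS]
  rw [hfrS]
  exact ⟨hT0, hsum, hTne, by rw [hfin]⟩


lemma sum_Icc_cast (a b : ℕ) (h1 : 1 ≤ a) (h : a ≤ b + 1) :
    (∑ i ∈ Finset.Icc a b, (i : ℤ)) * 2 = ((a : ℤ) + b) * ((b : ℤ) + 1 - a) := by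
  have e : Finset.Icc a b = Finset.range (b + 1) \ Finset.range a := by
    ext x; simp only [mem_Icc, mem_sdiff, mem_range]; omega
  rw [e, Finset.sum_sdiff_eq_sub (by intro x hx; simp only [mem_range] at *; omega), sub_mul]
  have g1 : (∑ i ∈ Finset.range (b + 1), (i : ℤ)) * 2 = ((b : ℤ) + 1) * b := by
    have := Finset.sum_range_id_mul_two (b + 1)
    have h2 := congrArg (Nat.cast : ℕ → ℤ) this
    push_cast at h2
    simpa using h2
  have g2 : (∑ i ∈ Finset.range a, (i : ℤ)) * 2 = (a : ℤ) * ((a : ℤ) - 1) := by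
    have := Finset.sum_range_id_mul_two a
    have h2 := congrArg (Nat.cast : ℕ → ℤ) this
    push_cast [Nat.cast_sub h1] at h2
    simpa using h2
  rw [g1, g2]
  ring

lemma eq_Icc_of (hne : S.Nonempty) (hsb : mn S = rb S) : S = Finset.Icc (mn S) (mx S) := by
  refine subset_antisymm (fun x hx => mem_Icc.mpr ⟨mn_le hx, le_mx hx⟩) ?_
  rw [hsb]
  exact (rb_mem_spec hne).2

lemma run_sum (h0 : 0 ∉ S) (hne : S.Nonempty) (hrun : S = Finset.Icc (mn S) (mx S)) :
    ((S.sum id : ℕ) : ℤ) * 2 = ((mn S : ℤ) + mx S) * ((mx S : ℤ) + 1 - mn S) := by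
  have h1 : 1 ≤ mn S := one_le_of_mem h0 (mn_mem hne)
  have h2 : mn S ≤ mx S := le_mx (mn_mem hne)
  have hcast : ((S.sum id : ℕ) : ℤ) = ∑ i ∈ Finset.Icc (mn S) (mx S), (i : ℤ) := by
    nth_rewrite 1 [hrun]
    push_cast
    simp [id]
  rw [hcast]
  exact sum_Icc_cast _ _ h1 (by omega)

lemma no_exceptions {n : ℕ} (h7 : n % 7 = 3 ∨ n % 7 = 4 ∨ n % 7 = 6)
    (h0 : 0 ∉ S) (hne : S.Nonempty) (hsum : S.sum id = n) :
    ¬(mn S = rb S ∧ mn S + mn S = mx S + 1) ∧ ¬(mn S = rb S ∧ 2 * rb S = mx S + 2) := by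
  have hn7 : (n : ZMod 7) = ((n % 7 : ℕ) : ZMod 7) := (ZMod.natCast_mod n 7).symm
  have hsM : mn S ≤ mx S := le_mx (mn_mem hne)
  constructor
  · rintro ⟨h1, h2⟩
    have hs := run_sum h0 hne (eq_Icc_of hne h1)
    rw [hsum] at hs
    have hM : (mx S : ℤ) = 2 * (mn S : ℤ) - 1 := by
      have := congrArg (Nat.cast : ℕ → ℤ) h2
      push_cast at this
      linarith
    rw [hM] at hs
    have heq : (n : ℤ) * 2 = (3 * (mn S : ℤ) - 1) * (mn S : ℤ) := by linear_combination hs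
    have hz := congrArg (Int.cast : ℤ → ZMod 7) heq
    push_cast at hz
    rw [hn7] at hz
    have key : ∀ y : ZMod 7, (3 * y - 1) * y ≠ 6 ∧ (3 * y - 1) * y ≠ 1 ∧ (3 * y - 1) * y ≠ 5 := by
      decide
    rcases h7 with h | h | h <;> rw [h] at hz
    · exact (key _).1 (by rw [← hz]; decide)
    · exact (key _).2.1 (by rw [← hz]; decide)
    · exact (key _).2.2 (by rw [← hz]; decide)
  · rintro ⟨h1, h2⟩
    have hs := run_sum h0 hne (eq_Icc_of hne h1)
    rw [hsum] at hs
    have hM : (mx S : ℤ) = 2 * (mn S : ℤ) - 2 := by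
      have := congrArg (Nat.cast : ℕ → ℤ) h2
      rw [← h1] at this
      push_cast at this
      linarith
    rw [hM] at hs
    have heq : (n : ℤ) * 2 = (3 * (mn S : ℤ) - 2) * ((mn S : ℤ) - 1) := by linear_combination hs
    have hz := congrArg (Int.cast : ℤ → ZMod 7) heq
    push_cast at hz
    rw [hn7] at hz
    have key : ∀ y : ZMod 7, (3 * y - 2) * (y - 1) ≠ 6 ∧ (3 * y - 2) * (y - 1) ≠ 1 ∧
        (3 * y - 2) * (y - 1) ≠ 5 := by decide
    rcases h7 with h | h | h <;> rw [h] at hz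
    · exact (key _).1 (by rw [← hz]; decide)
    · exact (key _).2.1 (by rw [← hz]; decide)
    · exact (key _).2.2 (by rw [← hz]; decide)

lemma fr_good {n : ℕ} (h7 : n % 7 = 3 ∨ n % 7 = 4 ∨ n % 7 = 6)
    (h0 : 0 ∉ S) (hsum : S.sum id = n) (hne : S.Nonempty) :
    0 ∉ fr S ∧ (fr S).sum id = S.sum id ∧ fr S ≠ S ∧ fr (fr S) = S := by
  obtain ⟨hexA, hexB⟩ := no_exceptions h7 h0 hne hsum
  by_cases h : mn S + rb S ≤ mx S + 1
  · exact caseA h0 hne h hexA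
  · exact caseB h0 hne h hexB


lemma even_card_of_invol {β : Type*} [DecidableEq β] (t : Finset β) (f : β → β)
    (hmem : ∀ x ∈ t, f x ∈ t) (hinv : ∀ x ∈ t, f (f x) = x) (hfix : ∀ x ∈ t, f x ≠ x) :
    Even t.card := by
  induction t using Finset.strongInduction with
  | _ t ih =>
    rcases t.eq_empty_or_nonempty with rfl | ⟨a, ha⟩
    · simp
    · have hfa : f a ∈ t := hmem a ha
      have hne : f a ≠ a := hfix a ha
      set t' := (t.erase a).erase (f a) with ht'
      have hsub' : t' ⊆ t := fun x hx => mem_of_mem_erase (mem_of_mem_erase hx)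
      have hat' : a ∉ t' := by simp [ht', Finset.mem_erase]
      have hsub : t' ⊂ t := Finset.ssubset_iff_of_subset hsub' |>.mpr ⟨a, ha, hat'⟩
      have hfa' : f a ∈ t.erase a := mem_erase.mpr ⟨hne, hfa⟩
      have h2 : 2 ≤ t.card := Finset.one_lt_card.mpr ⟨a, ha, f a, hfa, hne.symm⟩
      have hc : t.card = t'.card + 2 := by
        rw [ht', card_erase_of_mem hfa', card_erase_of_mem ha]
        omega
      have hrec : Even t'.card := by
        refine ih t' hsub (fun x hx => ?_) (fun x hx => hinv x (hsub' hx))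
          (fun x hx => hfix x (hsub' hx))
        have hxt : x ∈ t := hsub' hx
        have hx1 : x ≠ f a := (mem_erase.mp hx).1
        have hx2 : x ≠ a := (mem_erase.mp (mem_erase.mp hx).2).1
        refine mem_erase.mpr ⟨fun h => ?_, mem_erase.mpr ⟨fun h => ?_, hmem x hxt⟩⟩
        · exact hx2 (by rw [← hinv x hxt, h, hinv a ha])
        · exact hx1 (by rw [← hinv x hxt, h])
      obtain ⟨k, hk⟩ := hrec
      exact ⟨k + 1, by omega⟩

def sets (A : ℕ → Prop) [DecidablePred A] (n : ℕ) : Finset (Finset ℕ) :=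
  (Finset.range (n + 1)).powerset.filter fun S => 0 ∉ S ∧ S.sum id = n ∧ ∀ x ∈ S, A x

lemma mem_sets {A : ℕ → Prop} [DecidablePred A] {n : ℕ} {S : Finset ℕ} :
    S ∈ sets A n ↔ 0 ∉ S ∧ S.sum id = n ∧ ∀ x ∈ S, A x := by
  rw [sets, mem_filter, mem_powerset]
  constructor
  · tauto
  · rintro ⟨h0, hsum, hA⟩
    refine ⟨fun x hx => mem_range.mpr ?_, h0, hsum, hA⟩
    have hle : x ≤ n := by
      rw [← hsum]
      exact Finset.single_le_sum (f := id) (fun i _ => Nat.zero_le _) hx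
    omega

lemma D_even {n : ℕ} (h7 : n % 7 = 3 ∨ n % 7 = 4 ∨ n % 7 = 6) :
    Even ((sets (fun _ => True) n).card) := by
  have hne : ∀ S ∈ sets (fun _ => True) n, S.Nonempty := by
    intro S hS
    rcases mem_sets.mp hS with ⟨h0, hsum, _⟩
    rcases S.eq_empty_or_nonempty with rfl | h
    · simp at hsum; omega
    · exact h
  refine even_card_of_invol _ fr (fun S hS => ?_) (fun S hS => ?_) (fun S hS => ?_)
  · obtain ⟨h0, hsum, _⟩ := mem_sets.mp hS
    obtain ⟨a, b, c, d⟩ := fr_good h7 h0 hsum (hne S hS)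
    exact mem_sets.mpr ⟨a, by rw [b, hsum], fun _ _ => trivial⟩
  · obtain ⟨h0, hsum, _⟩ := mem_sets.mp hS
    exact (fr_good h7 h0 hsum (hne S hS)).2.2.2
  · obtain ⟨h0, hsum, _⟩ := mem_sets.mp hS
    exact (fr_good h7 h0 hsum (hne S hS)).2.2.1

lemma conv (A : ℕ → Prop) [DecidablePred A] (n : ℕ) :
    (sets (fun _ => True) n).card =
      ∑ m ∈ Finset.range (n + 1), (sets A m).card * (sets (fun x => ¬ A x) (n - m)).card := by
  have hstep : ∑ m ∈ Finset.range (n + 1), (sets A m).card * (sets (fun x => ¬ A x) (n - m)).card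
      = ((Finset.range (n + 1)).sigma
          (fun m => sets A m ×ˢ sets (fun x => ¬ A x) (n - m))).card := by
    rw [Finset.card_sigma]
    exact Finset.sum_congr rfl (fun m _ => (Finset.card_product _ _).symm)
  rw [hstep]
  refine Finset.card_bij' (i := fun S _ =>
      ⟨(S.filter A).sum id, (S.filter A, S.filter (fun x => ¬ A x))⟩)
    (j := fun p _ => p.2.1 ∪ p.2.2) ?_ ?_ ?_ ?_
  · intro S hS
    obtain ⟨h0, hsum, _⟩ := mem_sets.mp hS
    rw [Finset.mem_sigma]
    have hsplit : (S.filter A).sum id + (S.filter (fun x => ¬ A x)).sum id = n := by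
      rw [← hsum]
      exact Finset.sum_filter_add_sum_filter_not S A id
    refine ⟨mem_range.mpr ?_, Finset.mem_product.mpr ⟨?_, ?_⟩⟩
    · show (S.filter A).sum id < n + 1
      omega
    · exact mem_sets.mpr ⟨fun h => h0 (mem_filter.mp h).1, rfl,
        fun x hx => (mem_filter.mp hx).2⟩
    · refine mem_sets.mpr ⟨fun h => h0 (mem_filter.mp h).1, ?_,
        fun x hx => (mem_filter.mp hx).2⟩
      show (S.filter (fun x => ¬ A x)).sum id = n - (S.filter A).sum id
      omega
  · rintro ⟨m, T, U⟩ hp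
    rw [Finset.mem_sigma, Finset.mem_product] at hp
    obtain ⟨hm, hT, hU⟩ := hp
    obtain ⟨hT0, hTsum, hTA⟩ := mem_sets.mp hT
    obtain ⟨hU0, hUsum, hUA⟩ := mem_sets.mp hU
    have hdisj : Disjoint T U := by
      rw [Finset.disjoint_left]
      intro x hxT hxU
      exact hUA x hxU (hTA x hxT)
    refine mem_sets.mpr ⟨?_, ?_, fun _ _ => trivial⟩
    · intro h
      rcases Finset.mem_union.mp h with h | h
      · exact hT0 h
      · exact hU0 h
    · rw [Finset.sum_union hdisj, hTsum, hUsum]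
      rw [mem_range] at hm
      omega
  · intro S hS
    exact Finset.filter_union_filter_not_eq A S
  · rintro ⟨m, T, U⟩ hp
    rw [Finset.mem_sigma, Finset.mem_product] at hp
    obtain ⟨hm, hT, hU⟩ := hp
    obtain ⟨hT0, hTsum, hTA⟩ := mem_sets.mp hT
    obtain ⟨hU0, hUsum, hUA⟩ := mem_sets.mp hU
    have h1 : (T ∪ U).filter A = T := by
      rw [Finset.filter_union]
      rw [Finset.filter_true_of_mem hTA, Finset.filter_false_of_mem (fun x hx => by
        simpa using hUA x hx)]
      exact Finset.union_empty T
    have h2 : (T ∪ U).filter (fun x => ¬ A x) = U := by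
      rw [Finset.filter_union]
      rw [Finset.filter_false_of_mem (fun x hx h => h (hTA x hx)), Finset.filter_true_of_mem hUA]
      exact Finset.empty_union U
    dsimp only
    rw [h1, h2, hTsum]

lemma sets_not_dvd {A : ℕ → Prop} [DecidablePred A] (hA : ∀ x, ¬ A x → 7 ∣ x) {m : ℕ}
    (hm : ¬ 7 ∣ m) : sets (fun x => ¬ A x) m = ∅ := by
  rw [Finset.eq_empty_iff_forall_notMem]
  intro S hS
  obtain ⟨h0, hsum, hP⟩ := mem_sets.mp hS
  apply hm
  rw [← hsum]
  exact Finset.dvd_sum (fun x hx => hA x (hP x hx))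

lemma sets_zero {A : ℕ → Prop} [DecidablePred A] : sets A 0 = {∅} := by
  ext S
  rw [mem_sets, Finset.mem_singleton]
  constructor
  · rintro ⟨h0, hsum, _⟩
    rw [Finset.eq_empty_iff_forall_notMem]
    intro x hx
    have hle : x ≤ 0 := by
      rw [← hsum]
      exact Finset.single_le_sum (f := id) (fun i _ => Nat.zero_le _) hx
    have : x ≠ 0 := fun h => h0 (h ▸ hx)
    omega
  · rintro rfl
    exact ⟨by simp, by simp, by simp⟩

lemma key (A : ℕ → Prop) [DecidablePred A] (hA : ∀ x, ¬ A x → 7 ∣ x) :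
    ∀ n, (n % 7 = 3 ∨ n % 7 = 4 ∨ n % 7 = 6) → (sets A n).card % 2 = 0 := by
  intro n
  induction n using Nat.strong_induction_on with
  | _ n ih =>
    intro h7
    have hD : (sets (fun _ => True) n).card % 2 = 0 := Nat.even_iff.mp (D_even h7)
    have hconv := conv A n
    rw [Finset.sum_range_succ] at hconv
    have hlast : sets (fun x => ¬ A x) (n - n) = {∅} := by
      rw [Nat.sub_self]; exact sets_zero
    rw [hlast, Finset.card_singleton, mul_one] at hconv
    have heven : ∀ m ∈ Finset.range n,
        ((sets A m).card * (sets (fun x => ¬ A x) (n - m)).card) % 2 = 0 := by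
      intro m hm
      rw [Finset.mem_range] at hm
      by_cases hd : 7 ∣ (n - m)
      · have h7m : m % 7 = 3 ∨ m % 7 = 4 ∨ m % 7 = 6 := by omega
        have := ih m hm h7m
        rw [Nat.mul_mod, this]
        simp
      · rw [sets_not_dvd hA hd]
        simp
    have hsum : (∑ m ∈ Finset.range n,
        (sets A m).card * (sets (fun x => ¬ A x) (n - m)).card) % 2 = 0 := by
      rw [Finset.sum_nat_mod, Finset.sum_congr rfl heven]
      simp
    omega


lemma sum_id_val (S : Finset ℕ) : S.sum id = S.val.sum := by
  show (S.val.map id).sum = S.val.sum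
  rw [Multiset.map_id]

def predA (t : ℕ) (x : ℕ) : Prop := x % t ≠ 7 % t ∧ x % t ≠ (t - 7) % t

instance (t : ℕ) : DecidablePred (predA t) := fun x => by unfold predA; infer_instance

def toSet (t n : ℕ)
    (p : {p : n.Partition // p.parts.Nodup ∧
      ∀ x ∈ p.parts, x % t ≠ 7 % t ∧ x % t ≠ (t - 7) % t}) :
    {S // S ∈ sets (predA t) n} :=
  ⟨p.1.parts.toFinset, mem_sets.mpr
    ⟨fun h => absurd (p.1.parts_pos (Multiset.mem_toFinset.mp h)) (lt_irrefl 0),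
     by
      have hval : p.1.parts.toFinset.val = p.1.parts :=
        (Multiset.toFinset_val _).trans (Multiset.dedup_eq_self.mpr p.2.1)
      rw [sum_id_val, hval, p.1.parts_sum],
     fun x hx => p.2.2 x (Multiset.mem_toFinset.mp hx)⟩⟩

def toPart (t n : ℕ) (S : {S // S ∈ sets (predA t) n}) :
    {p : n.Partition // p.parts.Nodup ∧
      ∀ x ∈ p.parts, x % t ≠ 7 % t ∧ x % t ≠ (t - 7) % t} :=
  ⟨⟨S.1.val,
    fun {i} hi => Nat.pos_of_ne_zero (fun h => (mem_sets.mp S.2).1 (h ▸ hi)),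
    by rw [← sum_id_val]; exact (mem_sets.mp S.2).2.1⟩,
   S.1.nodup, fun x hx => (mem_sets.mp S.2).2.2 x hx⟩

lemma Q_eq (t n : ℕ) : Q t 7 n = (sets (predA t) n).card := by
  rw [Q, ← Nat.card_eq_finsetCard]
  exact Nat.card_congr
    { toFun := toSet t n
      invFun := toPart t n
      left_inv := by
        intro p
        apply Subtype.ext
        apply Nat.Partition.ext
        show p.1.parts.toFinset.val = p.1.parts
        exact (Multiset.toFinset_val _).trans (Multiset.dedup_eq_self.mpr p.2.1)
      right_inv := by
        intro S
        apply Subtype.ext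
        show Multiset.toFinset S.1.val = S.1
        exact Finset.val_toFinset S.1 }

lemma main (α : ℕ) (hα : 1 ≤ α) (m : ℕ) (h7 : m % 7 = 3 ∨ m % 7 = 4 ∨ m % 7 = 6) :
    Q (7 * α) 7 m ≡ 0 [MOD 2] := by
  have h7t : 7 ∣ 7 * α := ⟨α, rfl⟩
  have hA : ∀ x, ¬ predA (7 * α) x → 7 ∣ x := by
    intro x hx
    unfold predA at hx
    rw [not_and_or, not_not, not_not] at hx
    have hm : 7 ∣ x % (7 * α) := by
      rcases hx with h | h
      · rw [h]
        exact (Nat.dvd_mod_iff h7t).mpr ⟨1, rfl⟩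
      · rw [h]
        exact (Nat.dvd_mod_iff h7t).mpr (Nat.dvd_sub h7t (dvd_refl 7))
    exact (Nat.dvd_mod_iff h7t).mp hm
  have hk := key (predA (7 * α)) hA m h7
  show Q (7 * α) 7 m % 2 = 0 % 2
  rw [Q_eq]
  omega
end
end Stmt9

theorem stmt9 (α n : ℕ) (hα : 1 ≤ α) :
    Q (7 * α) 7 (7 * n + 3) ≡ 0 [MOD 2] ∧ Q (7 * α) 7 (7 * n + 4) ≡ 0 [MOD 2] ∧
      Q (7 * α) 7 (7 * n + 6) ≡ 0 [MOD 2] :=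
  ⟨Stmt9.main α hα _ (by omega), Stmt9.main α hα _ (by omega), Stmt9.main α hα _ (by omega)⟩
end
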